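/- arXiv:2506.13157 — 5 statements merged into one kernel-verified Lean document; each statement's English description precedes it below -/
import Mathlib

section
/- Let n ≥ 2 and let W_1, …, W_n be nonempty subsets of M satisfying condition (SD). Then there exist total preorders ≼_1, …, ≼_n on M and, for each i ∈ {1,…,n−1}, a nonempty set A_i ⊆ M and a set B_i ⊆ M, such that: ≼_1 is the full-meet preorder of W_1; each ≼_i is faithful to W_i; and for each i ∈ {1,…,n−1}, letting ≼'_i be the lexicographic revision of ≼_i by A_i and R_i = min(A_i, ≼_i), it holds that W_{i+1} = R_i ∪ min(M\B_i, ≼'_i) and ≼_{i+1} is the moderate contraction of ≼'_i by B_i. In other words, every sequence of belief sets satisfying (SD) is generated by iterating a lexicographic (Darwiche–Pearl compliant) revision followed by a moderate (Darwiche–Pearl compliant) contraction. -/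
/-- A possible world over the propositional variables `P`. -/
abbrev World (P : Type) := P → Bool

/-- `minSet S le` is the set of `le`-minimal elements of `S`. -/
def minSet {P : Type} (S : Set (World P)) (le : World P → World P → Prop) :
    Set (World P) :=
  {r | r ∈ S ∧ ∀ r' ∈ S, le r r'}

/-- A total preorder: reflexive, transitive and total. -/
def TotalPreorder {P : Type} (le : World P → World P → Prop) : Prop :=
  Reflexive le ∧ Transitive le ∧ ∀ r r', le r r' ∨ le r' r

/-- `le` is faithful to `W` iff the `le`-minimal worlds are exactly `W`. -/
def Faithful {P : Type} (le : World P → World P → Prop) (W : Set (World P)) : Prop :=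
  minSet Set.univ le = W

/-- The strict part of a preorder. -/
def strictPart {P : Type} (le : World P → World P → Prop) (r r' : World P) : Prop :=
  le r r' ∧ ¬ le r' r

/-- The full-meet preorder of a belief set `W`. -/
def fullMeet {P : Type} (W : Set (World P)) : World P → World P → Prop :=
  fun r r' => r ∈ W ∨ r' ∉ W

/-- Type-B distance: the symmetric difference of the model sets. -/
def distB {P : Type} (W1 W2 : Set (World P)) : Set (World P) :=
  (W1 \ W2) ∪ (W2 \ W1)

/-- Condition (SD) on a sequence of belief sets. -/
def SD {P : Type} {n : ℕ} (W : Fin n → Set (World P)) : Prop :=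
  ∀ i j m : Fin n, i < j → j < m → distB (W j) (W m) ⊆ distB (W i) (W m)

/-- Lexicographic revision of the preorder `le` by the (nonempty) input `A`. -/
def lexRev {P : Type} (le : World P → World P → Prop) (A : Set (World P)) :
    World P → World P → Prop :=
  fun r r' => (r ∈ A ∧ r' ∉ A) ∨ ((r ∈ A ↔ r' ∈ A) ∧ le r r')

/-- `le''` is the moderate contraction of `le` (faithful to `R`) by `B`:
conditions (C1), (C2), (MC) and faithfulness to `R ∪ min(M\B, le)`. -/
def IsModCon {P : Type} (le : World P → World P → Prop) (R B : Set (World P))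
    (le'' : World P → World P → Prop) : Prop :=
  TotalPreorder le'' ∧
  (∀ r r', r ∈ B → r' ∈ B → (le'' r r' ↔ le r r')) ∧
  (∀ r r', r ∉ B → r' ∉ B → (le'' r r' ↔ le r r')) ∧
  (∀ r r', r ∉ B → r' ∈ B → r' ∉ R ∪ minSet Bᶜ le → strictPart le'' r r') ∧
  minSet Set.univ le'' = R ∪ minSet Bᶜ le

/-!
Rank a world `r` at stage `i` by one plus the last index `j ≤ i` with `r ∈ W_j`, or zero if there
is none (this is `lastRank V (i + 1) r`), and let `≼_i` prefer higher ranks. Revising `≼_i`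
lexicographically by `A_i = W_{i+1}` and contracting by `B_i = M \ (W_{i+1} \ W_i)` lifts exactly
`W_{i+1}` to the new top rank. The one point needing (SD) is that the new worlds `W_{i+1} \ W_i`
were never believed before, so they all share rank `0` and are therefore all minimal in `M \ B_i`
for the revised order.
-/

def ofRank {α : Type*} (g : α → ℕ) : α → α → Prop :=
  fun r r' => g r' ≤ g r

section ofRank

variable {P : Type} (g : World P → ℕ)

theorem totalPreorder_ofRank : TotalPreorder (ofRank g) :=
  ⟨fun _ => le_rfl, fun _ _ _ h₁ h₂ => le_trans h₂ h₁, fun _ _ => le_total _ _⟩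

theorem faithful_ofRank {W : Set (World P)} {N : ℕ} (hle : ∀ r, g r ≤ N)
    (hW : ∀ r, g r = N ↔ r ∈ W) (hne : W.Nonempty) : Faithful (ofRank g) W := by
  obtain ⟨w, hw⟩ := hne
  ext r
  simp only [minSet, ofRank, Set.mem_univ, true_and, forall_const, Set.mem_ofPred_eq]
  rw [← hW]
  exact ⟨fun h => le_antisymm (hle r) ((hW w).2 hw ▸ h w), fun h r' => h ▸ hle r'⟩

end ofRank

open Classical in
noncomputable def lastRank {α : Type*} (V : ℕ → Set α) : ℕ → α → ℕ
  | 0 => fun _ => 0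
  | k + 1 => fun r => if r ∈ V k then k + 1 else lastRank V k r

section lastRank

variable {α : Type*} (V : ℕ → Set α)

theorem lastRank_le (k : ℕ) (r : α) : lastRank V k r ≤ k := by
  induction k with
  | zero => exact le_rfl
  | succ k ih =>
    simp only [lastRank]
    split_ifs <;> omega

theorem lastRank_succ_eq_self_iff (k : ℕ) (r : α) : lastRank V (k + 1) r = k + 1 ↔ r ∈ V k := by
  have := lastRank_le V k r
  simp only [lastRank]
  split_ifs with h
  · simp [h]
  · simp only [h, iff_false]
    omega

theorem lastRank_succ_of_notMem {k : ℕ} {r : α} (hr : r ∉ V k) :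
    lastRank V (k + 1) r = lastRank V k r := by
  simp [lastRank, hr]

theorem lastRank_eq_zero {k : ℕ} {r : α} (hr : ∀ j < k, r ∉ V j) : lastRank V k r = 0 := by
  induction k with
  | zero => rfl
  | succ k ih =>
    rw [lastRank_succ_of_notMem V (hr k k.lt_succ_self)]
    exact ih fun j hj => hr j (hj.trans k.lt_succ_self)

end lastRank

theorem ofRank_lastRank_one {P : Type} (V : ℕ → Set (World P)) :
    ofRank (lastRank V 1) = fullMeet (V 0) := by
  funext r r'
  simp only [ofRank, lastRank, fullMeet, eq_iff_iff]
  split_ifs <;> simp_all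

theorem SD.notMem_of_notMem {P : Type} {n : ℕ} {W : Fin n → Set (World P)} (hSD : SD W)
    {j k m : Fin n} (hjk : j < k) (hkm : k < m) {r : World P} (hm : r ∈ W m) (hk : r ∉ W k) :
    r ∉ W j := by
  intro hj
  rcases hSD j k m hjk hkm (Or.inr ⟨hm, hk⟩) with ⟨_, h⟩ | ⟨_, h⟩
  · exact h hm
  · exact h hj

section step

variable {P : Type} {g g' : World P → ℕ} {W W' : Set (World P)} {N : ℕ}

theorem eq_minSet_union_minSet_lexRev (hle : ∀ r, g r ≤ N) (hW : ∀ r ∈ W, g r = N)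
    (hnew : ∀ r ∈ W', r ∉ W → g r = 0) :
    W' = minSet W' (ofRank g) ∪ minSet (W' \ W)ᶜᶜ (lexRev (ofRank g) W') := by
  rw [compl_compl]
  ext r
  refine ⟨fun hr => ?_, ?_⟩
  · by_cases hrW : r ∈ W
    · exact Or.inl ⟨hr, fun r' _ => (hle r').trans_eq (hW r hrW).symm⟩
    · refine Or.inr ⟨⟨hr, hrW⟩, fun r' hr' => Or.inr ⟨iff_of_true hr hr'.1, ?_⟩⟩
      simp only [ofRank, hnew r' hr'.1 hr'.2, zero_le]
  · rintro (⟨hr, -⟩ | ⟨⟨hr, -⟩, -⟩) <;> exact hr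

theorem isModCon_ofRank (hle : ∀ r, g r ≤ N) (hW : ∀ r ∈ W, g r = N)
    (hnew : ∀ r ∈ W', r ∉ W → g r = 0) (hne : W'.Nonempty)
    (hg'_mem : ∀ r ∈ W', g' r = N + 1) (hg'_notMem : ∀ r ∉ W', g' r = g r) :
    IsModCon (lexRev (ofRank g) W') (minSet W' (ofRank g)) (W' \ W)ᶜ (ofRank g') := by
  have hdecomp := eq_minSet_union_minSet_lexRev hle hW hnew
  have hg'_le : ∀ r, g' r ≤ N + 1 := fun r => by
    by_cases hr : r ∈ W'
    · exact (hg'_mem r hr).le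
    · exact (hg'_notMem r hr).trans_le ((hle r).trans N.le_succ)
  refine ⟨totalPreorder_ofRank g', ?_, ?_, ?_, ?_⟩
  · intro r r' hr _
    have hrW : r ∈ W' → r ∈ W := by simpa using hr
    have := hle r
    have := hle r'
    by_cases hrA : r ∈ W' <;> by_cases hr'A : r' ∈ W'
    · simp [lexRev, ofRank, hrA, hr'A, hg'_mem, hW r (hrW hrA), hle r']
    · simp [lexRev, ofRank, hrA, hr'A, hg'_mem, hg'_notMem]
      omega
    · simp [lexRev, ofRank, hrA, hr'A, hg'_mem, hg'_notMem]
      omega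
    · simp [lexRev, ofRank, hrA, hr'A, hg'_notMem]
  · intro r r' hr hr'
    rw [Set.notMem_compl_iff] at hr hr'
    simp [lexRev, ofRank, hg'_mem r hr.1, hg'_mem r' hr'.1, hnew r hr.1 hr.2, hnew r' hr'.1 hr'.2,
      hr.1, hr'.1]
  · intro r r' hr _ hr'R
    rw [Set.notMem_compl_iff] at hr
    rw [← hdecomp] at hr'R
    simp only [strictPart, ofRank, hg'_mem r hr.1, hg'_notMem r' hr'R]
    have := hle r'
    omega
  · rw [← hdecomp]
    refine faithful_ofRank g' hg'_le (fun r => ⟨fun h => ?_, hg'_mem r⟩) hne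
    by_contra hr
    have := hle r
    rw [hg'_notMem r hr] at h
    omega

end step

theorem statement0 {P : Type} {n : ℕ} (hn : 2 ≤ n)
    (W : Fin n → Set (World P)) (hne : ∀ i, (W i).Nonempty) (hSD : SD W) :
    ∃ le : Fin n → (World P → World P → Prop),
      le ⟨0, by omega⟩ = fullMeet (W ⟨0, by omega⟩) ∧
      (∀ i, TotalPreorder (le i) ∧ Faithful (le i) (W i)) ∧
      (∀ (i : ℕ) (hi : i + 1 < n),
        ∃ A B : Set (World P), A.Nonempty ∧
          W ⟨i + 1, hi⟩ =
            minSet A (le ⟨i, by omega⟩) ∪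
              minSet Bᶜ (lexRev (le ⟨i, by omega⟩) A) ∧
          IsModCon (lexRev (le ⟨i, by omega⟩) A) (minSet A (le ⟨i, by omega⟩)) B
            (le ⟨i + 1, hi⟩)) := by
  set V : ℕ → Set (World P) := fun j => if h : j < n then W ⟨j, h⟩ else ∅
  have hVW : ∀ j (h : j < n), V j = W ⟨j, h⟩ := fun j h => dif_pos h
  have hVne : ∀ j < n, (V j).Nonempty := fun j h => hVW j h ▸ hne _
  refine ⟨fun k => ofRank (lastRank V (k + 1)), ?_, fun k => ⟨totalPreorder_ofRank _, ?_⟩, ?_⟩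
  · rw [← hVW]
    exact ofRank_lastRank_one V
  · rw [← hVW]
    exact faithful_ofRank _ (lastRank_le V _) (lastRank_succ_eq_self_iff V _) (hVne k k.2)
  · intro i hi
    have hnew : ∀ r ∈ V (i + 1), r ∉ V i → lastRank V (i + 1) r = 0 := fun r hr hri =>
      lastRank_eq_zero V fun j hj hrj => by
        rcases (Nat.lt_succ_iff.1 hj).lt_or_eq with hji | rfl
        · rw [hVW _ hi] at hr
          rw [hVW _ (by omega)] at hri hrj
          exact hSD.notMem_of_notMem (k := ⟨i, by omega⟩) hji (Nat.lt_succ_self i) hr hri hrj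
        · exact hri hrj
    refine ⟨V (i + 1), (V (i + 1) \ V i)ᶜ, hVne _ hi, ?_, ?_⟩
    · rw [← hVW]
      exact eq_minSet_union_minSet_lexRev (lastRank_le V _)
        (fun r => (lastRank_succ_eq_self_iff V i r).2) hnew
    · exact isModCon_ofRank (lastRank_le V _) (fun r => (lastRank_succ_eq_self_iff V i r).2) hnew
        (hVne _ hi) (fun r => (lastRank_succ_eq_self_iff V _ r).2)
        (fun _ => lastRank_succ_of_notMem V)
end

section
/- Assume P has at least two elements (so M has at least four worlds). The full-meet revision policy, which revises a nonempty belief set W ⊆ M by a nonempty A ⊆ M with result min(A, ≼_W) and assigns to the result its own full-meet preorder, violates the Darwiche–Pearl semantic condition (R2): there exist a nonempty W ⊆ M, a nonempty A ⊆ M, and worlds r, r' ∈ M\A such that r ≺_W r' but not r ≺_{W'} r', where W' = min(A, ≼_W) and ≼_{W'} is the full-meet preorder of W'. Consequently, full-meet AGM revision violates the conjunction of the Darwiche–Pearl postulates (DP1)–(DP4). -/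
/-!
Take three distinct worlds `r`, `r'`, `w` (there are at least four), `W = {r}` and `A = {w}`.
Since `A` misses `W`, no world of `A` is strictly preferred to another, so `W' = A`. Then `r` and
`r'` both lie outside `W'` and become `≼_{W'}`-equivalent, although `r ≺_W r'`.
-/

theorem strictPart_fullMeet_iff {P : Type} {W : Set (World P)} {r r' : World P} :
    strictPart (fullMeet W) r r' ↔ r ∈ W ∧ r' ∉ W := by
  simp only [strictPart, fullMeet]
  tauto

theorem minSet_fullMeet_of_disjoint {P : Type} {A W : Set (World P)} (h : Disjoint A W) :
    minSet A (fullMeet W) = A :=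
  Set.ext fun _ => ⟨And.left, fun hr => ⟨hr, fun _ hr' => Or.inr (Set.disjoint_left.1 h hr')⟩⟩

theorem two_lt_card_world {P : Type} [Fintype P] [DecidableEq P] (hP : 2 ≤ Fintype.card P) :
    2 < Fintype.card (World P) := by
  rw [Fintype.card_fun, Fintype.card_bool]
  calc 2 < 2 ^ 2 := by norm_num
    _ ≤ 2 ^ Fintype.card P := Nat.pow_le_pow_right two_pos hP

theorem statement1_general {P : Type} [Fintype P]
    (hP : 2 ≤ Fintype.card P) :
    ∃ (W A : Set (World P)) (r r' : World P),
      W.Nonempty ∧ A.Nonempty ∧ r ∉ A ∧ r' ∉ A ∧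
      strictPart (fullMeet W) r r' ∧
      ¬ strictPart (fullMeet (minSet A (fullMeet W))) r r' := by
  classical
  obtain ⟨r, r', w, hrr', hrw, hr'w⟩ := Fintype.two_lt_card_iff.1 (two_lt_card_world hP)
  refine ⟨{r}, {w}, r, r', Set.singleton_nonempty r, Set.singleton_nonempty w, hrw, hr'w,
    strictPart_fullMeet_iff.2 ⟨rfl, hrr'.symm⟩, ?_⟩
  rw [minSet_fullMeet_of_disjoint (Set.disjoint_singleton.2 hrw.symm), strictPart_fullMeet_iff]
  exact fun h => hrw h.1

theorem statement1 {P : Type} [Fintype P] [Nonempty P]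
    (hP : 2 ≤ Fintype.card P) :
    ∃ (W A : Set (World P)) (r r' : World P),
      W.Nonempty ∧ A.Nonempty ∧ r ∉ A ∧ r' ∉ A ∧
      strictPart (fullMeet W) r r' ∧
      ¬ strictPart (fullMeet (minSet A (fullMeet W))) r r' :=
  statement1_general hP
end

section
/- (Katsuno–Mendelzon representation of AGM revision, semantic form) Let ∘ be a function assigning to each nonempty W ⊆ M and each A ⊆ M a subset W∘A ⊆ M. Then ∘ satisfies all of the following for all nonempty W and all A, B ⊆ M: (i) W∘A ⊆ A; (ii) W∩A ⊆ W∘A; (iii) if W∩A ≠ ∅ then W∘A ⊆ W∩A; (iv) if A ≠ ∅ then W∘A ≠ ∅; (v) (W∘A)∩B ⊆ W∘(A∩B); (vi) if (W∘A)∩B ≠ ∅ then W∘(A∩B) ⊆ (W∘A)∩B — if and only if for every nonempty W ⊆ M there exists a total preorder ≼_W on M faithful to W such that W∘A = min(A, ≼_W) for all A ⊆ M. -/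
/-!
The preorder is revealed preference: `r ≼_W r'` iff `r ∈ W ∘ {r, r'}`. Postulates (v) and (vi)
together give Arrow's choice axiom — if `B ⊆ A` meets `W ∘ A` then `W ∘ B = (W ∘ A) ∩ B` — and
this makes revealed preference a total preorder whose minimal elements in `A` are exactly
`W ∘ A`; faithfulness is (ii) and (iii) at `A = M`. Conversely, minimal sets of a total preorder
satisfy (v) and (vi) directly, (ii) and (iii) are (v) and (vi) at `A = M` for a faithful preorder,
and (iv) holds because `M` is finite.
-/

open Set

variable {P : Type}

section MinSet

variable {le : World P → World P → Prop} {A B : Set (World P)}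

theorem minSet_subset : minSet A le ⊆ A := fun _ hr => hr.1

theorem minSet_inter_subset : minSet A le ∩ B ⊆ minSet (A ∩ B) le :=
  fun _ ⟨⟨hrA, hmin⟩, hrB⟩ => ⟨⟨hrA, hrB⟩, fun r' hr' => hmin r' hr'.1⟩

theorem minSet_inter_subset_of_nonempty (htrans : ∀ ⦃a b c⦄, le a b → le b c → le a c)
    (hne : (minSet A le ∩ B).Nonempty) : minSet (A ∩ B) le ⊆ minSet A le ∩ B := by
  obtain ⟨s, ⟨hsA, hsmin⟩, hsB⟩ := hne
  rintro r ⟨⟨hrA, hrB⟩, hmin⟩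
  exact ⟨⟨hrA, fun r' hr' => htrans (hmin s ⟨hsA, hsB⟩) (hsmin r' hr')⟩, hrB⟩

theorem TotalPreorder.minSet_nonempty [Finite (World P)] (hle : TotalPreorder le)
    (hA : A.Nonempty) : (minSet A le).Nonempty := by
  obtain ⟨-, htrans, htot⟩ := hle
  have : IsTrans (World P) (strictPart le) :=
    ⟨fun _ _ _ hab hbc => ⟨htrans hab.1 hbc.1, fun hca => hbc.2 (htrans hca hab.1)⟩⟩
  have : Std.Irrefl (strictPart le) := ⟨fun _ h => h.2 h.1⟩
  obtain ⟨r, hrA, hr⟩ := (Finite.wellFounded_of_trans_of_irrefl (strictPart le)).has_min A hA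
  exact ⟨r, hrA, fun r' hr' =>
    (htot r r').elim id fun hr'r => by_contra fun hrr' => hr r' hr' ⟨hr'r, hrr'⟩⟩

end MinSet

section ChoiceFunction

variable {C : Set (World P) → Set (World P)}

def SatisfiesArrowAxiom (C : Set (World P) → Set (World P)) : Prop :=
  ∀ A B, B ⊆ A → (C A ∩ B).Nonempty → C B = C A ∩ B

def revealedPref (C : Set (World P) → Set (World P)) (r r' : World P) : Prop :=
  r ∈ C {r, r'}

theorem satisfiesArrowAxiom_of_inter (hv : ∀ A B, C A ∩ B ⊆ C (A ∩ B))
    (hvi : ∀ A B, (C A ∩ B).Nonempty → C (A ∩ B) ⊆ C A ∩ B) : SatisfiesArrowAxiom C := by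
  intro A B hBA hne
  have h := (hvi A B hne).antisymm (hv A B)
  rwa [inter_eq_self_of_subset_right hBA] at h

theorem SatisfiesArrowAxiom.mem_of_revealedPref (hC : SatisfiesArrowAxiom C)
    (hsub : ∀ A, C A ⊆ A) {A : Set (World P)} {x y : World P}
    (hx : x ∈ C A) (hy : y ∈ A) (hyx : revealedPref C y x) : y ∈ C A := by
  have hpair : {y, x} ⊆ A := insert_subset hy (singleton_subset_iff.2 (hsub A hx))
  have hyx' : y ∈ C {y, x} := hyx
  rw [hC A {y, x} hpair ⟨x, hx, mem_insert_of_mem _ rfl⟩] at hyx'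
  exact hyx'.1

theorem SatisfiesArrowAxiom.revealedPref_of_mem (hC : SatisfiesArrowAxiom C)
    (hsub : ∀ A, C A ⊆ A) {A : Set (World P)} {x y : World P}
    (hy : y ∈ C A) (hx : x ∈ A) : revealedPref C y x := by
  have hpair : {y, x} ⊆ A := insert_subset (hsub A hy) (singleton_subset_iff.2 hx)
  show y ∈ C {y, x}
  rw [hC A {y, x} hpair ⟨y, hy, mem_insert _ _⟩]
  exact ⟨hy, mem_insert _ _⟩

theorem SatisfiesArrowAxiom.eq_minSet_revealedPref (hC : SatisfiesArrowAxiom C)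
    (hsub : ∀ A, C A ⊆ A) (hne : ∀ A, A.Nonempty → (C A).Nonempty) (A : Set (World P)) :
    C A = minSet A (revealedPref C) := by
  ext r
  refine ⟨fun hr => ⟨hsub A hr, fun r' hr' => hC.revealedPref_of_mem hsub hr hr'⟩, ?_⟩
  rintro ⟨hrA, hmin⟩
  obtain ⟨s, hs⟩ := hne A ⟨r, hrA⟩
  exact hC.mem_of_revealedPref hsub hs hrA (hmin s (hsub A hs))

theorem SatisfiesArrowAxiom.totalPreorder_revealedPref (hC : SatisfiesArrowAxiom C)
    (hsub : ∀ A, C A ⊆ A) (hne : ∀ A, A.Nonempty → (C A).Nonempty) :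
    TotalPreorder (revealedPref C) := by
  refine ⟨fun r => ?_, fun r s t hrs hst => ?_, fun r r' => ?_⟩
  · obtain ⟨x, hx⟩ := hne {r, r} ⟨r, mem_insert _ _⟩
    obtain rfl : x = r := by simpa using hsub _ hx
    exact hx
  · obtain ⟨x, hx⟩ := hne {r, s, t} ⟨r, mem_insert _ _⟩
    have hr : r ∈ C {r, s, t} := by
      have hs_r : s ∈ C {r, s, t} → r ∈ C {r, s, t} := fun hs =>
        hC.mem_of_revealedPref hsub hs (by simp) hrs
      rcases hsub _ hx with rfl | rfl | rfl
      · exact hx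
      · exact hs_r hx
      · exact hs_r (hC.mem_of_revealedPref hsub hx (by simp) hst)
    exact hC.revealedPref_of_mem hsub hr (by simp)
  · obtain ⟨x, hx⟩ := hne {r, r'} ⟨r, mem_insert _ _⟩
    rcases hsub _ hx with rfl | rfl
    · exact Or.inl hx
    · exact Or.inr (show x ∈ C {x, r} from pair_comm r x ▸ hx)

end ChoiceFunction

theorem statement6_general {P : Type} [Fintype P]
    (rev : Set (World P) → Set (World P) → Set (World P)) :
    (∀ W A B : Set (World P), W.Nonempty →
      (rev W A ⊆ A) ∧
      (W ∩ A ⊆ rev W A) ∧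
      (W ∩ A ≠ ∅ → rev W A ⊆ W ∩ A) ∧
      (A ≠ ∅ → rev W A ≠ ∅) ∧
      ((rev W A) ∩ B ⊆ rev W (A ∩ B)) ∧
      ((rev W A) ∩ B ≠ ∅ → rev W (A ∩ B) ⊆ (rev W A) ∩ B)) ↔
    (∀ W : Set (World P), W.Nonempty →
      ∃ le : World P → World P → Prop,
        TotalPreorder le ∧ Faithful le W ∧ ∀ A, rev W A = minSet A le) := by
  constructor
  · intro h W hW
    have hsub A : rev W A ⊆ A := (h W A A hW).1
    have hne A (hA : A.Nonempty) : (rev W A).Nonempty :=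
      nonempty_iff_ne_empty.2 ((h W A A hW).2.2.2.1 hA.ne_empty)
    have hC : SatisfiesArrowAxiom (rev W) := satisfiesArrowAxiom_of_inter
      (fun A B => (h W A B hW).2.2.2.2.1) (fun A B hAB => (h W A B hW).2.2.2.2.2 hAB.ne_empty)
    have hrep := hC.eq_minSet_revealedPref hsub hne
    have huniv : rev W univ = W := by
      obtain ⟨-, hii, hiii, -⟩ := h W univ univ hW
      simp only [inter_univ] at hii hiii
      exact (hiii hW.ne_empty).antisymm hii
    refine ⟨revealedPref (rev W), hC.totalPreorder_revealedPref hsub hne, ?_, hrep⟩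
    rw [Faithful, ← hrep, huniv]
  · intro h W A B hW
    obtain ⟨le, hle, hfaith, hrep⟩ := h W hW
    subst hfaith
    simp only [hrep]
    refine ⟨minSet_subset, by simpa using minSet_inter_subset (A := univ) (B := A), fun hWA => ?_,
      fun hA => (hle.minSet_nonempty (nonempty_iff_ne_empty.2 hA)).ne_empty, minSet_inter_subset,
      fun hAB => minSet_inter_subset_of_nonempty hle.2.1 (nonempty_iff_ne_empty.2 hAB)⟩
    simpa using minSet_inter_subset_of_nonempty hle.2.1 (nonempty_iff_ne_empty.2 hWA)

theorem statement6 {P : Type} [Fintype P] [Nonempty P]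
    (rev : Set (World P) → Set (World P) → Set (World P)) :
    (∀ W A B : Set (World P), W.Nonempty →
      (rev W A ⊆ A) ∧
      (W ∩ A ⊆ rev W A) ∧
      (W ∩ A ≠ ∅ → rev W A ⊆ W ∩ A) ∧
      (A ≠ ∅ → rev W A ≠ ∅) ∧
      ((rev W A) ∩ B ⊆ rev W (A ∩ B)) ∧
      ((rev W A) ∩ B ≠ ∅ → rev W (A ∩ B) ⊆ (rev W A) ∩ B)) ↔
    (∀ W : Set (World P), W.Nonempty →
      ∃ le : World P → World P → Prop,
        TotalPreorder le ∧ Faithful le W ∧ ∀ A, rev W A = minSet A le) :=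
  statement6_general rev
end

section
/- Let ≼ be a total preorder on M faithful to a nonempty R ⊆ M, and let B ⊆ M with M\B ≠ ∅. Then there exists exactly one total preorder ≼'' on M satisfying: (C1) for r,r' ∈ B, r ≼'' r' iff r ≼ r'; (C2) for r,r' ∈ M\B, r ≼'' r' iff r ≼ r'; (MC) for every r ∈ M\B and r' ∈ B with r' ∉ R ∪ min(M\B,≼), r ≺'' r'; and min(M, ≼'') = R ∪ min(M\B,≼) (faithfulness to the contracted belief set). -/
/-
The contraction is forced: (C1) and (C2) fix it on each side of `B`, faithfulness makes the
contracted models `G = R ∪ min(M\B, ≼)` exactly the bottom layer, and (MC) decides every remaining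
comparison across `B`. Conversely, sinking `G` to the bottom of the lexicographic revision of `≼`
by `M\B` satisfies all four conditions, because `G` is closed downwards and lies below everything
on its own side of `B`.
-/

variable {P : Type}

theorem mem_minSet_univ_iff {le : World P → World P → Prop} {r : World P} :
    r ∈ minSet Set.univ le ↔ ∀ s, le r s := by
  simp [minSet]

def withBottom (G : Set (World P)) (le : World P → World P → Prop) (r r' : World P) : Prop :=
  r ∈ G ∨ (r' ∉ G ∧ le r r')

namespace TotalPreorder

variable {le : World P → World P → Prop}

theorem lexRev (hle : TotalPreorder le) (A : Set (World P)) :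
    TotalPreorder (_root_.lexRev le A) := by
  obtain ⟨hrefl, htrans, htot⟩ := hle
  refine ⟨fun r => Or.inr ⟨Iff.rfl, hrefl r⟩, ?_, fun r r' => ?_⟩
  · rintro r s t (⟨hr, hs⟩ | ⟨hrs, hle_rs⟩) (⟨hs', ht⟩ | ⟨hst, hle_st⟩)
    · exact absurd hs' hs
    · exact Or.inl ⟨hr, fun ht => hs (hst.2 ht)⟩
    · exact Or.inl ⟨hrs.2 hs', ht⟩
    · exact Or.inr ⟨hrs.trans hst, htrans hle_rs hle_st⟩
  · unfold _root_.lexRev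
    by_cases hr : r ∈ A <;> by_cases hr' : r' ∈ A <;> rcases htot r r' with h | h <;> tauto

theorem withBottom (hle : TotalPreorder le) (G : Set (World P)) :
    TotalPreorder (_root_.withBottom G le) := by
  obtain ⟨hrefl, htrans, htot⟩ := hle
  refine ⟨fun r => ?_, ?_, fun r r' => ?_⟩
  · by_cases hr : r ∈ G
    · exact Or.inl hr
    · exact Or.inr ⟨hr, hrefl r⟩
  · rintro r s t (hr | ⟨hs, hle_rs⟩) (hs' | ⟨ht, hle_st⟩)
    · exact Or.inl hr
    · exact Or.inl hr
    · exact absurd hs' hs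
    · exact Or.inr ⟨ht, htrans hle_rs hle_st⟩
  · unfold _root_.withBottom
    by_cases hr : r ∈ G <;> by_cases hr' : r' ∈ G <;> rcases htot r r' with h | h <;> tauto

end TotalPreorder

theorem minSet_univ_withBottom {le : World P → World P → Prop} {G : Set (World P)}
    (hG : G.Nonempty) : minSet Set.univ (withBottom G le) = G := by
  ext r
  refine ⟨fun hr => ?_, fun hr => mem_minSet_univ_iff.2 fun _ => Or.inl hr⟩
  obtain ⟨g, hg⟩ := hG
  rcases mem_minSet_univ_iff.1 hr g with hr | ⟨hg', -⟩
  · exact hr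
  · exact absurd hg hg'

/-- The moderate contraction: the contracted models `R ∪ min(M\B, le)` form the bottom layer;
above them come the remaining worlds of `M\B`, then those of `B`, each ordered by `le`. -/
def modCon (le : World P → World P → Prop) (R B : Set (World P)) : World P → World P → Prop :=
  withBottom (R ∪ minSet Bᶜ le) (lexRev le Bᶜ)

section Faithful

variable {le : World P → World P → Prop} {R B : Set (World P)} {r s : World P}

theorem Faithful.mem_iff (hfaith : Faithful le R) : r ∈ R ↔ ∀ s, le r s := by
  rw [← hfaith, mem_minSet_univ_iff]

theorem Faithful.le_of_mem_union_minSet (hfaith : Faithful le R)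
    (hr : r ∈ R ∪ minSet Bᶜ le) (hside : s ∈ B → r ∈ B) : le r s := by
  rcases hr with hr | ⟨hrB, hmin⟩
  · exact hfaith.mem_iff.1 hr s
  · exact hmin s fun hs => hrB (hside hs)

theorem Faithful.mem_union_minSet_of_le (hle : TotalPreorder le) (hfaith : Faithful le R)
    (hrs : le r s) (hs : s ∈ R ∪ minSet Bᶜ le) (hside : r ∈ B → s ∈ B) :
    r ∈ R ∪ minSet Bᶜ le := by
  rcases hs with hs | ⟨hsB, hmin⟩
  · exact Or.inl (hfaith.mem_iff.2 fun t => hle.2.1 hrs (hfaith.mem_iff.1 hs t))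
  · exact Or.inr ⟨fun hr => hsB (hside hr), fun t ht => hle.2.1 hrs (hmin t ht)⟩

theorem modCon_iff_of_mem_iff_mem (hle : TotalPreorder le) (hfaith : Faithful le R)
    (hside : r ∈ B ↔ s ∈ B) : modCon le R B r s ↔ le r s := by
  have hlex : lexRev le Bᶜ r s ↔ le r s := by
    simp only [lexRev, Set.mem_compl_iff, hside, and_not_self, false_or,
      iff_self, true_and]
  have hbelow (hr : r ∈ R ∪ minSet Bᶜ le) : le r s := hfaith.le_of_mem_union_minSet hr hside.2
  have hclosed (hrs : le r s) (hs : s ∈ R ∪ minSet Bᶜ le) : r ∈ R ∪ minSet Bᶜ le :=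
    hfaith.mem_union_minSet_of_le hle hrs hs hside.1
  unfold modCon withBottom
  rw [hlex]
  tauto

theorem isModCon_modCon (hle : TotalPreorder le) (hR : R.Nonempty) (hfaith : Faithful le R)
    (B : Set (World P)) : IsModCon le R B (modCon le R B) := by
  refine ⟨(hle.lexRev Bᶜ).withBottom _,
    fun r s hr hs => modCon_iff_of_mem_iff_mem hle hfaith (iff_of_true hr hs),
    fun r s hr hs => modCon_iff_of_mem_iff_mem hle hfaith (iff_of_false hr hs),
    fun r s hr hs hsG => ?_, minSet_univ_withBottom (hR.mono Set.subset_union_left)⟩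
  simp only [strictPart, modCon, withBottom, lexRev, Set.mem_compl_iff]
  tauto

end Faithful

namespace IsModCon

variable {le le'' : World P → World P → Prop} {R B : Set (World P)} {r s : World P}

theorem le_iff_of_mem_of_notMem (h : IsModCon le R B le'') (hr : r ∈ B) (hs : s ∉ B) :
    le'' r s ↔ r ∈ R ∪ minSet Bᶜ le := by
  obtain ⟨-, -, -, hMC, hmin⟩ := h
  refine ⟨fun hrs => ?_, fun hrG => ?_⟩
  · by_contra hrG
    exact (hMC s r hs hr hrG).2 hrs
  · rw [← hmin] at hrG
    exact mem_minSet_univ_iff.1 hrG s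

theorem le_iff_of_notMem_of_mem (h : IsModCon le R B le'') (hr : r ∉ B) (hs : s ∈ B) :
    le'' r s ↔ (s ∈ R ∪ minSet Bᶜ le → r ∈ R ∪ minSet Bᶜ le) := by
  obtain ⟨⟨-, htrans, -⟩, -, -, hMC, hmin⟩ := h
  rw [← hmin, mem_minSet_univ_iff, mem_minSet_univ_iff]
  refine ⟨fun hrs hsG t => htrans hrs (hsG t), fun hG => ?_⟩
  by_cases hsG : ∀ t, le'' s t
  · exact hG hsG s
  · rw [← mem_minSet_univ_iff, hmin] at hsG
    exact (hMC r s hr hs hsG).1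

theorem unique {le₂ : World P → World P → Prop} (h : IsModCon le R B le'')
    (h₂ : IsModCon le R B le₂) : le'' = le₂ := by
  funext r s
  apply propext
  by_cases hr : r ∈ B <;> by_cases hs : s ∈ B
  · rw [h.2.1 r s hr hs, h₂.2.1 r s hr hs]
  · rw [h.le_iff_of_mem_of_notMem hr hs, h₂.le_iff_of_mem_of_notMem hr hs]
  · rw [h.le_iff_of_notMem_of_mem hr hs, h₂.le_iff_of_notMem_of_mem hr hs]
  · rw [h.2.2.1 r s hr hs, h₂.2.2.1 r s hr hs]

end IsModCon

theorem statement10_general {P : Type}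
    (le : World P → World P → Prop) (hle : TotalPreorder le)
    (R : Set (World P)) (hR : R.Nonempty) (hfaith : Faithful le R)
    (B : Set (World P)) :
    ∃! le'' : World P → World P → Prop,
      TotalPreorder le'' ∧
      (∀ r r', r ∈ B → r' ∈ B → (le'' r r' ↔ le r r')) ∧
      (∀ r r', r ∉ B → r' ∉ B → (le'' r r' ↔ le r r')) ∧
      (∀ r r', r ∉ B → r' ∈ B → r' ∉ R ∪ minSet Bᶜ le → strictPart le'' r r') ∧
      minSet Set.univ le'' = R ∪ minSet Bᶜ le :=
  have hmod := isModCon_modCon hle hR hfaith B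
  ⟨modCon le R B, hmod, fun _ h => IsModCon.unique h hmod⟩

theorem statement10 {P : Type} [Fintype P] [Nonempty P]
    (le : World P → World P → Prop) (hle : TotalPreorder le)
    (R : Set (World P)) (hR : R.Nonempty) (hfaith : Faithful le R)
    (B : Set (World P)) (hB : Bᶜ ≠ (∅ : Set (World P))) :
    ∃! le'' : World P → World P → Prop,
      TotalPreorder le'' ∧
      (∀ r r', r ∈ B → r' ∈ B → (le'' r r' ↔ le r r')) ∧
      (∀ r r', r ∉ B → r' ∉ B → (le'' r r' ↔ le r r')) ∧
      (∀ r r', r ∉ B → r' ∈ B → r' ∉ R ∪ minSet Bᶜ le → strictPart le'' r r') ∧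
      minSet Set.univ le'' = R ∪ minSet Bᶜ le :=
  statement10_general le hle R hR hfaith B
end

section
/- (Dalal layers form a gradual transition) Let N be the cardinality of P, fix a world w0 ∈ M, and for each k with 0 ≤ k ≤ N let L_k = {r ∈ M : |Diff(w0, r)| = k}. Then each L_k is nonempty, and for all indices i, m with 0 ≤ i < m ≤ N, Dist_A(L_i, L_m) = m − i. Consequently, for all i < j < m ≤ N, Dist_A(L_i, L_m) > Dist_A(L_j, L_m), i.e., the sequence of Dalal distance layers around w0 satisfies the strict version of condition (DA). -/
/-- Hamming distance between two worlds. -/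
def hamming {P : Type} [Fintype P] (r r' : World P) : ℕ :=
  (Finset.univ.filter fun p => r p ≠ r' p).card

/-- Dalal's distance from a (nonempty) belief set `W` to a world `r`. -/
noncomputable def dalalD {P : Type} [Fintype P] (W : Set (World P)) (r : World P) : ℕ :=
  sInf {k | ∃ w ∈ W, hamming w r = k}

/-- Dalal's preorder associated with `W`. -/
def dalal {P : Type} [Fintype P] (W : Set (World P)) :
    World P → World P → Prop :=
  fun r r' => dalalD W r ≤ dalalD W r'

/-- Type-A distance between two (nonempty) belief sets. -/
noncomputable def distA {P : Type} [Fintype P] (W1 W2 : Set (World P)) : ℕ :=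
  sInf {d | ∃ w ∈ W1, ∃ w' ∈ W2, hamming w w' = d}

/-! The layers are the spheres of the Hamming metric around `w0`. By the triangle inequality
through `w0`, worlds in the spheres of radii `i < m` are at distance at least `m - i`, and this
bound is attained by flipping `w0` on nested sets of `i` and `m` coordinates. Hence
`Dist_A(L_i, L_m) = m - i`, which is strictly decreasing in `i`. -/

open scoped symmDiff

lemma hamming_eq_hammingDist {P : Type} [Fintype P] (r r' : World P) :
    hamming r r' = hammingDist r r' :=
  rfl

def flipOn {P : Type} [DecidableEq P] (w : World P) (S : Finset P) : World P :=
  fun p => if p ∈ S then !w p else w p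

@[simp]
lemma flipOn_empty {P : Type} [DecidableEq P] (w : World P) : flipOn w ∅ = w := by
  funext p
  simp [flipOn]

section flipOn

variable {P : Type} [Fintype P] [DecidableEq P]

lemma hamming_flipOn_flipOn (w : World P) (S T : Finset P) :
    hamming (flipOn w S) (flipOn w T) = (S ∆ T).card := by
  rw [hamming]
  congr 1
  ext p
  rw [Finset.mem_filter]
  by_cases hS : p ∈ S <;> by_cases hT : p ∈ T <;> simp [flipOn, Finset.mem_symmDiff, hS, hT]

lemma hamming_flipOn (w : World P) (S : Finset P) : hamming w (flipOn w S) = S.card := by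
  have := hamming_flipOn_flipOn w ∅ S
  rwa [flipOn_empty, ← Finset.bot_eq_empty, bot_symmDiff] at this

lemma hamming_flipOn_flipOn_of_subset (w : World P) {S T : Finset P} (hST : S ⊆ T) :
    hamming (flipOn w S) (flipOn w T) = T.card - S.card := by
  rw [hamming_flipOn_flipOn, symmDiff_of_le hST, Finset.card_sdiff_of_subset hST]

end flipOn

section layers

variable {P : Type} [Fintype P]

lemma sub_le_hamming_of_hamming_eq {w0 w w' : World P} {i m : ℕ}
    (hw : hamming w0 w = i) (hw' : hamming w0 w' = m) : m - i ≤ hamming w w' := by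
  have := hammingDist_triangle w0 w w'
  simp only [← hamming_eq_hammingDist] at this
  omega

lemma distA_eq_of_forall_le {W1 W2 : Set (World P)} {w w' : World P} {d : ℕ}
    (hw : w ∈ W1) (hw' : w' ∈ W2) (hd : hamming w w' = d)
    (hle : ∀ v ∈ W1, ∀ v' ∈ W2, d ≤ hamming v v') : distA W1 W2 = d := by
  refine le_antisymm (Nat.sInf_le ⟨w, hw, w', hw', hd⟩) (le_csInf ⟨d, w, hw, w', hw', hd⟩ ?_)
  rintro _ ⟨v, hv, v', hv', rfl⟩
  exact hle v hv v' hv'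

lemma hamming_layer_nonempty (w0 : World P) {k : ℕ} (hk : k ≤ Fintype.card P) :
    {r : World P | hamming w0 r = k}.Nonempty := by
  classical
  obtain ⟨S, -, hS⟩ := Finset.exists_subset_card_eq (s := Finset.univ) hk
  exact ⟨flipOn w0 S, by simp [hamming_flipOn, hS]⟩

lemma distA_hamming_layers (w0 : World P) {i m : ℕ} (him : i ≤ m)
    (hm : m ≤ Fintype.card P) :
    distA {r : World P | hamming w0 r = i} {r : World P | hamming w0 r = m} = m - i := by
  classical
  obtain ⟨T, -, hT⟩ := Finset.exists_subset_card_eq (s := Finset.univ) hm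
  obtain ⟨S, hST, hS⟩ := Finset.exists_subset_card_eq (s := T) (hT ▸ him)
  refine distA_eq_of_forall_le (w := flipOn w0 S) (w' := flipOn w0 T)
    (hamming_flipOn w0 S |>.trans hS) (hamming_flipOn w0 T |>.trans hT) ?_ ?_
  · rw [hamming_flipOn_flipOn_of_subset w0 hST, hS, hT]
  · intro v hv v' hv'
    exact sub_le_hamming_of_hamming_eq hv hv'

end layers

theorem statement13_general {P : Type} [Fintype P] (w0 : World P) :
    (∀ k ≤ Fintype.card P, {r : World P | hamming w0 r = k}.Nonempty) ∧
    (∀ i m : ℕ, i < m → m ≤ Fintype.card P →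
      distA {r : World P | hamming w0 r = i} {r : World P | hamming w0 r = m} =
        m - i) ∧
    (∀ i j m : ℕ, i < j → j < m → m ≤ Fintype.card P →
      distA {r : World P | hamming w0 r = j} {r : World P | hamming w0 r = m} <
        distA {r : World P | hamming w0 r = i} {r : World P | hamming w0 r = m}) := by
  refine ⟨fun k hk => hamming_layer_nonempty w0 hk,
    fun i m him hm => distA_hamming_layers w0 him.le hm, ?_⟩
  intro i j m hij hjm hm
  rw [distA_hamming_layers w0 (hij.trans hjm).le hm, distA_hamming_layers w0 hjm.le hm]
  omega

theorem statement13 {P : Type} [Fintype P] [Nonempty P] (w0 : World P) :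
    (∀ k ≤ Fintype.card P, {r : World P | hamming w0 r = k}.Nonempty) ∧
    (∀ i m : ℕ, i < m → m ≤ Fintype.card P →
      distA {r : World P | hamming w0 r = i} {r : World P | hamming w0 r = m} =
        m - i) ∧
    (∀ i j m : ℕ, i < j → j < m → m ≤ Fintype.card P →
      distA {r : World P | hamming w0 r = j} {r : World P | hamming w0 r = m} <
        distA {r : World P | hamming w0 r = i} {r : World P | hamming w0 r = m}) :=
  statement13_general w0
end
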